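/- arXiv:math/0010307 — 8 statements merged into one kernel-verified Lean document; each statement's English description precedes it below -/
import Mathlib

section
/- Let p be a prime, q = p^m with m ≥ 1, n ≥ 1 and 1 ≤ i ≤ n, and let R be a commutative ring of characteristic p. Then in the polynomial ring R[t], the formal derivative of s_{n,i}(t) equals (s_{n−1,i−1}(t))^q. -/
open Polynomial Finset

/-- The `i`-th `(n,q)`-elementary symmetric polynomial
`s_{n,i}(t) = Σ_{S ⊆ {0,…,n−1}, |S| = i} t^(Σ_{j∈S} q^j)`, as a polynomial over `R`. -/
noncomputable def sPoly (q n i : ℕ) (R : Type*) [CommSemiring R] : Polynomial R :=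
  ∑ S ∈ Finset.powersetCard i (Finset.univ : Finset (Fin n)),
    Polynomial.X ^ (∑ j ∈ S, q ^ (j : ℕ))

/-- in characteristic `p`, with `q = p^m`, the formal derivative of
`s_{n,i}(t)` equals `(s_{n−1,i−1}(t))^q`. -/
theorem derivative_sPoly_eq_pow
    (p m q n i : ℕ) (hp : p.Prime) (hm : 1 ≤ m) (hq : q = p ^ m)
    (hn : 1 ≤ n) (hi1 : 1 ≤ i) (hin : i ≤ n)
    (R : Type*) [CommRing R] [CharP R p] :
    Polynomial.derivative (sPoly q n i R) = (sPoly q (n - 1) (i - 1) R) ^ q := by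
  rcases n with _ | k
  · omega
  rcases i with _ | l
  · omega
  haveI := Fact.mk hp
  haveI : ExpChar (Polynomial R) p := ExpChar.prime hp
  simp only [Nat.add_sub_cancel]
  -- cast of q^(j+1) is zero
  have hq0 : ∀ j : ℕ, ((q ^ (j + 1) : ℕ) : R) = 0 := by
    intro j
    subst hq
    rw [pow_succ, Nat.cast_mul, Nat.cast_pow, Nat.cast_pow, CharP.cast_eq_zero R p,
      zero_pow (by omega), mul_zero]
  set E : Finset (Fin (k + 1)) → ℕ := fun S => ∑ j ∈ S, q ^ (j : ℕ) with hE
  have hcast : ∀ S : Finset (Fin (k + 1)),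
      S ⊆ univ.map ⟨Fin.succ, Fin.succ_injective _⟩ → ((E S : ℕ) : R) = 0 := by
    intro S hS
    rw [hE, Nat.cast_sum]
    refine Finset.sum_eq_zero fun j hj => ?_
    obtain ⟨j', _, rfl⟩ := Finset.mem_map.mp (hS hj)
    simpa using hq0 (j' : ℕ)
  rw [sPoly, Fin.univ_succ, Finset.cons_eq_insert,
    Finset.powersetCard_succ_insert (by simp), Finset.sum_union]
  · rw [map_add]
    have h1 : Polynomial.derivative
        (∑ S ∈ powersetCard (l + 1) (univ.map ⟨Fin.succ, Fin.succ_injective k⟩),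
          (X : Polynomial R) ^ E S) = 0 := by
      rw [map_sum]
      refine Finset.sum_eq_zero fun S hS => ?_
      rw [Polynomial.derivative_X_pow, hcast S (Finset.mem_powersetCard.mp hS).1,
        map_zero, zero_mul]
    rw [h1, zero_add]
    rw [Finset.sum_image (f := fun S => (X : Polynomial R) ^ E S)]
    swap
    · intro A hA B hB hAB
      have h0A : (0 : Fin (k+1)) ∉ A := fun h => by
        obtain ⟨j', _, hj⟩ := Finset.mem_map.mp ((Finset.mem_powersetCard.mp hA).1 h)
        exact Fin.succ_ne_zero j' hj
      have h0B : (0 : Fin (k+1)) ∉ B := fun h => by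
        obtain ⟨j', _, hj⟩ := Finset.mem_map.mp ((Finset.mem_powersetCard.mp hB).1 h)
        exact Fin.succ_ne_zero j' hj
      rw [← Finset.erase_insert h0A, ← Finset.erase_insert h0B, hAB]
    rw [map_sum]
    have h2 : ∀ S ∈ powersetCard l (univ.map ⟨Fin.succ, Fin.succ_injective k⟩),
        Polynomial.derivative ((X : Polynomial R) ^ E (insert 0 S)) = X ^ E S := by
      intro S hS
      have h0S : (0 : Fin (k+1)) ∉ S := fun h => by
        obtain ⟨j', _, hj⟩ := Finset.mem_map.mp ((Finset.mem_powersetCard.mp hS).1 h)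
        exact Fin.succ_ne_zero j' hj
      have hins : E (insert 0 S) = 1 + E S := by
        simp [hE, Finset.sum_insert h0S]
      rw [hins, Polynomial.derivative_X_pow, Nat.cast_add, Nat.cast_one,
        hcast S (Finset.mem_powersetCard.mp hS).1, add_zero, map_one, one_mul,
        Nat.add_sub_cancel_left]
    rw [Finset.sum_congr rfl h2]
    rw [Finset.powersetCard_map, Finset.sum_map]
    rw [sPoly, hq, sum_pow_char_pow]
    refine Finset.sum_congr rfl fun S hS => ?_
    rw [← pow_mul]
    congr 1
    simp only [hE, RelEmbedding.coe_toEmbedding, Finset.mapEmbedding_apply, Finset.sum_map,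
      Function.Embedding.coeFn_mk, Fin.val_succ, pow_succ, ← Finset.sum_mul, hq]
  · rw [Finset.disjoint_right]
    intro S hS hS'
    obtain ⟨T, hT, rfl⟩ := Finset.mem_image.mp hS
    obtain ⟨j', _, hj⟩ := Finset.mem_map.mp ((Finset.mem_powersetCard.mp hS').1
      (Finset.mem_insert_self 0 T))
    exact Fin.succ_ne_zero j' hj
end

section
/- Let p be a prime, q = p^m a power of p, n ≥ 1, 1 ≤ i ≤ n, and let Ω be an algebraically closed field of characteristic p. If α ∈ Ω is a root of the polynomial s_{n,i}(t) ∈ Ω[t] whose multiplicity (Polynomial.rootMultiplicity of α in s_{n,i}) is not divisible by p, then α^{q^n} = α (i.e., α lies in the subfield of Ω with q^n elements). -/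
open Polynomial Finset in
/-- Auxiliary version of `sPoly` indexed by an arbitrary finite set of naturals. -/
noncomputable def ePoly (q : ℕ) (A : Finset ℕ) (i : ℕ) (R : Type*) [CommSemiring R] :
    Polynomial R :=
  ∑ S ∈ A.powersetCard i, Polynomial.X ^ (∑ j ∈ S, q ^ j)

open Polynomial Finset

lemma sPoly_eq_ePoly (q n i : ℕ) (R : Type*) [CommSemiring R] :
    sPoly q n i R = ePoly q (Finset.range n) i R := by
  unfold sPoly ePoly
  rw [← Nat.Iio_eq_range, ← Fin.map_valEmbedding_univ, Finset.powersetCard_map,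
    Finset.sum_map]
  refine Finset.sum_congr rfl fun S _ => ?_
  congr 1
  simp only [RelEmbedding.coe_toEmbedding, Finset.mapEmbedding_apply, Finset.sum_map,
    Fin.valEmbedding_apply]

lemma ePoly_insert (q : ℕ) (a : ℕ) (A : Finset ℕ) (ha : a ∉ A) (i : ℕ)
    (R : Type*) [CommSemiring R] :
    ePoly q (insert a A) (i + 1) R
      = ePoly q A (i + 1) R + Polynomial.X ^ (q ^ a) * ePoly q A i R := by
  classical
  unfold ePoly
  rw [Finset.powersetCard_succ_insert ha, Finset.sum_union, Finset.sum_image]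
  · congr 1
    rw [Finset.mul_sum]
    refine Finset.sum_congr rfl fun S hS => ?_
    have haS : a ∉ S := fun h => ha ((Finset.mem_powersetCard.1 hS).1 h)
    rw [Finset.sum_insert haS, pow_add]
  · intro S hS T hT hST
    have haS : a ∉ S := fun h => ha ((Finset.mem_powersetCard.1 hS).1 h)
    have haT : a ∉ T := fun h => ha ((Finset.mem_powersetCard.1 hT).1 h)
    have := congrArg (Finset.erase · a) hST
    simpa [Finset.erase_insert, haS, haT] using this
  · rw [Finset.disjoint_left]
    intro S hS hS'
    obtain ⟨T, hT, rfl⟩ := Finset.mem_image.1 hS'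
    exact ha ((Finset.mem_powersetCard.1 hS).1 (Finset.mem_insert_self a T))

lemma ePoly_pow_q (p m q : ℕ) (hp : p.Prime) (hq : q = p ^ m)
    (A : Finset ℕ) (i : ℕ) (Ω : Type*) [Field Ω] [CharP Ω p] :
    (ePoly q A i Ω) ^ q
      = ePoly q (A.map ⟨Nat.succ, Nat.succ_injective⟩) i Ω := by
  haveI : Fact p.Prime := ⟨hp⟩
  have hfr : ∀ x : Polynomial Ω, x ^ q = iterateFrobenius (Polynomial Ω) p m x := by
    intro x; rw [iterateFrobenius_def, hq]
  unfold ePoly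
  rw [hfr, map_sum, Finset.powersetCard_map, Finset.sum_map]
  refine Finset.sum_congr rfl fun S _ => ?_
  rw [← hfr, ← pow_mul]
  simp only [RelEmbedding.coe_toEmbedding, Finset.mapEmbedding_apply, Finset.sum_map,
    Function.Embedding.coeFn_mk]
  congr 1
  rw [Finset.sum_mul]
  exact Finset.sum_congr rfl fun j _ => by
    simp [pow_succ]

lemma range_eq_insert (n : ℕ) (hn : 1 ≤ n) :
    Finset.range n = insert 0 (Finset.Ico 1 n) := by
  ext x; simp [Finset.mem_range, Finset.mem_Ico]; omega

lemma range_map_succ (n : ℕ) :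
    (Finset.range n).map ⟨Nat.succ, Nat.succ_injective⟩ = Finset.Ico 1 (n + 1) := by
  ext x
  simp only [Finset.mem_map, Finset.mem_range, Finset.mem_Ico, Function.Embedding.coeFn_mk]
  constructor
  · rintro ⟨a, ha, rfl⟩; omega
  · rintro ⟨h1, h2⟩; exact ⟨x - 1, by omega, by omega⟩

/-- The key identity:
`s_{n,i}(X)^q − s_{n,i}(X) = (X^{q^n} − X) · s_{n−1,i−1}(X)^q` in characteristic `p`. -/
lemma sPoly_pow_sub (p m q n i : ℕ) (hp : p.Prime) (hq : q = p ^ m)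
    (hn : 1 ≤ n) (hi1 : 1 ≤ i)
    (Ω : Type*) [Field Ω] [CharP Ω p] :
    (sPoly q n i Ω) ^ q - sPoly q n i Ω
      = (Polynomial.X ^ q ^ n - Polynomial.X) * (sPoly q (n - 1) (i - 1) Ω) ^ q := by
  obtain ⟨i, rfl⟩ : ∃ j, i = j + 1 := ⟨i - 1, by omega⟩
  have h01 : (0 : ℕ) ∉ Finset.Ico 1 n := by simp
  have hnn : n ∉ Finset.Ico 1 n := by simp
  have e1 : sPoly q n (i + 1) Ω
      = ePoly q (Finset.Ico 1 n) (i + 1) Ω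
        + Polynomial.X * ePoly q (Finset.Ico 1 n) i Ω := by
    rw [sPoly_eq_ePoly, range_eq_insert n hn, ePoly_insert q 0 _ h01, pow_zero, pow_one]
  have e2 : (sPoly q n (i + 1) Ω) ^ q
      = ePoly q (Finset.Ico 1 n) (i + 1) Ω
        + Polynomial.X ^ q ^ n * ePoly q (Finset.Ico 1 n) i Ω := by
    rw [sPoly_eq_ePoly, ePoly_pow_q p m q hp hq, range_map_succ]
    have : Finset.Ico 1 (n + 1) = insert n (Finset.Ico 1 n) := by
      ext x; simp [Finset.mem_Ico, Finset.mem_insert]; omega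
    rw [this, ePoly_insert q n _ hnn]
  have e3 : (sPoly q (n - 1) i Ω) ^ q = ePoly q (Finset.Ico 1 n) i Ω := by
    rw [sPoly_eq_ePoly, ePoly_pow_q p m q hp hq, range_map_succ]
    congr 2
    omega
  rw [e2, e1, Nat.add_sub_cancel, e3]
  ring

/-- Multiplicity of a difference when the multiplicities differ. -/
lemma rootMultiplicity_sub_of_lt {Ω : Type*} [Field Ω] {a b : Polynomial Ω} {α : Ω}
    (hb : b ≠ 0)
    (h : b.rootMultiplicity α < a.rootMultiplicity α) :
    (a - b).rootMultiplicity α = b.rootMultiplicity α := by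
  classical
  have hab : a - b ≠ 0 := by
    intro h0
    rw [sub_eq_zero.1 h0] at h
    exact lt_irrefl _ h
  have hneg : (-b).rootMultiplicity α = b.rootMultiplicity α := by
    rw [← Polynomial.count_roots, Polynomial.roots_neg, Polynomial.count_roots]
  have hnegab : (-(a - b)).rootMultiplicity α = (a - b).rootMultiplicity α := by
    rw [← Polynomial.count_roots, Polynomial.roots_neg, Polynomial.count_roots]
  have h1 : b.rootMultiplicity α ≤ (a - b).rootMultiplicity α := by
    have := Polynomial.rootMultiplicity_add (p := a) (q := -b) α (by rwa [← sub_eq_add_neg])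
    rw [hneg, min_eq_right h.le, ← sub_eq_add_neg] at this
    exact this
  have h2 : (a - b).rootMultiplicity α ≤ b.rootMultiplicity α := by
    have := Polynomial.rootMultiplicity_add (p := a) (q := -(a - b)) α
      (by rw [← sub_eq_add_neg, sub_sub_cancel]; exact hb)
    rw [hnegab, ← sub_eq_add_neg, sub_sub_cancel] at this
    omega
  omega

/-- a root of `s_{n,i}` whose multiplicity is coprime to `p`
lies in the subfield with `q^n` elements, i.e. satisfies `α^{q^n} = α`. -/
theorem root_of_sPoly_mult_coprime_char_mem_Fqn
    (p m q n i : ℕ) (hp : p.Prime) (hm : 1 ≤ m) (hq : q = p ^ m)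
    (hn : 1 ≤ n) (hi1 : 1 ≤ i) (hin : i ≤ n)
    (Ω : Type*) [Field Ω] [IsAlgClosed Ω] [CharP Ω p]
    (α : Ω) (hroot : (sPoly q n i Ω).IsRoot α)
    (hmult : ¬ p ∣ Polynomial.rootMultiplicity α (sPoly q n i Ω)) :
    α ^ q ^ n = α := by
  classical
  by_contra hne
  set s := sPoly q n i Ω with hs_def
  set k := Polynomial.rootMultiplicity α s with hk_def
  have hk0 : k ≠ 0 := fun h => hmult (h ▸ dvd_zero p)
  have hs0 : s ≠ 0 := by
    intro h0
    rw [hk_def, h0, Polynomial.rootMultiplicity_zero] at hk0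
    exact hk0 rfl
  have hq2 : 2 ≤ q := by
    rw [hq]
    calc 2 ≤ p := hp.two_le
    _ = p ^ 1 := (pow_one p).symm
    _ ≤ p ^ m := Nat.pow_le_pow_right hp.pos hm
  -- multiplicity of s^q
  have hpow : Polynomial.rootMultiplicity α (s ^ q) = q * k := by
    rw [← Polynomial.count_roots, Polynomial.roots_pow, Multiset.count_nsmul,
      Polynomial.count_roots]
  have hlt : k < Polynomial.rootMultiplicity α (s ^ q) := by
    rw [hpow]
    have : 1 * k < q * k := (Nat.mul_lt_mul_right (Nat.pos_of_ne_zero hk0)).2 (by omega)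
    omega
  have hdiff : Polynomial.rootMultiplicity α (s ^ q - s) = k :=
    rootMultiplicity_sub_of_lt hs0 hlt
  have hkey := sPoly_pow_sub p m q n i hp hq hn hi1 Ω
  rw [← hs_def] at hkey
  have hdiff0 : s ^ q - s ≠ 0 := by
    intro h0
    have hd : s.natDegree ≠ 0 := by
      intro hd0
      obtain ⟨c, hc⟩ := Polynomial.natDegree_eq_zero.1 hd0
      have hcr : Polynomial.eval α (Polynomial.C c) = 0 := by rw [hc]; exact hroot
      rw [Polynomial.eval_C] at hcr
      rw [hcr, map_zero] at hc
      exact hs0 hc.symm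
    have := sub_eq_zero.1 h0
    have hdeg := congrArg Polynomial.natDegree this
    rw [Polynomial.natDegree_pow] at hdeg
    nlinarith [Nat.pos_of_ne_zero hd]
  set s' := sPoly q (n - 1) (i - 1) Ω with hs'_def
  have hg0 : Polynomial.rootMultiplicity α (Polynomial.X ^ q ^ n - Polynomial.X : Polynomial Ω)
      = 0 := by
    apply Polynomial.rootMultiplicity_eq_zero
    intro h
    apply hne
    have h0 : α ^ q ^ n - α = 0 := by simpa using h
    exact sub_eq_zero.1 h0
  have hmul : Polynomial.rootMultiplicity α (s ^ q - s)
      = Polynomial.rootMultiplicity α (Polynomial.X ^ q ^ n - Polynomial.X : Polynomial Ω)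
        + Polynomial.rootMultiplicity α (s' ^ q) := by
    rw [hkey]
    exact Polynomial.rootMultiplicity_mul (by rw [← hkey]; exact hdiff0)
  have hs'pow : Polynomial.rootMultiplicity α (s' ^ q)
      = q * Polynomial.rootMultiplicity α s' := by
    rw [← Polynomial.count_roots, Polynomial.roots_pow, Multiset.count_nsmul,
      Polynomial.count_roots]
  have : k = q * Polynomial.rootMultiplicity α s' := by
    rw [← hdiff, hmul, hg0, hs'pow, zero_add]
  apply hmult
  rw [this, hq]
  exact Dvd.dvd.mul_right (dvd_pow_self p (by omega)) _
end

section
/- Let p be a prime, q = p^m a power of p, n ≥ 1, 1 ≤ i ≤ n, and let Ω be an algebraically closed field of characteristic p. Then every root α ∈ Ω of the polynomial s_{n,i}(t) ∈ Ω[t] satisfies α^{q^k} = α for some integer k with n−i+1 ≤ k ≤ n (i.e., every root lies in a field F_{q^k} with n−i+1 ≤ k ≤ n). -/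
open Finset Polynomial

/-- `E q α n i = eᵢ(α, α^q, …, α^{q^{n-1}})`. -/
private noncomputable def EE (q : ℕ) {Ω : Type*} [CommSemiring Ω] (α : Ω) (n i : ℕ) : Ω :=
  ∑ S ∈ (Finset.range n).powersetCard i, ∏ j ∈ S, α ^ q ^ j

private lemma EE_zero {Ω : Type*} [CommSemiring Ω] (q : ℕ) (α : Ω) (n : ℕ) :
    EE q α n 0 = 1 := by
  simp [EE]

private lemma sum_powersetCard_insert {Ω : Type*} [CommSemiring Ω] {a : ℕ} {s : Finset ℕ}
    (ha : a ∉ s) (f : ℕ → Ω) (i : ℕ) :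
    ∑ S ∈ (insert a s).powersetCard (i + 1), ∏ j ∈ S, f j
      = (∑ S ∈ s.powersetCard (i + 1), ∏ j ∈ S, f j)
        + f a * ∑ S ∈ s.powersetCard i, ∏ j ∈ S, f j := by
  rw [Finset.powersetCard_succ_insert ha, Finset.sum_union, Finset.sum_image, Finset.mul_sum]
  · congr 1
    refine Finset.sum_congr rfl fun S hS => ?_
    have haS : a ∉ S := fun h => ha ((Finset.mem_powersetCard.1 hS).1 h)
    rw [Finset.prod_insert haS]
  · intro S hS T hT hST
    have haS : a ∉ S := fun h => ha ((Finset.mem_powersetCard.1 hS).1 h)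
    have haT : a ∉ T := fun h => ha ((Finset.mem_powersetCard.1 hT).1 h)
    have := congrArg (Finset.erase · a) hST
    simpa [Finset.erase_insert, haS, haT] using this
  · rw [Finset.disjoint_left]
    intro S hS hS'
    have haS : a ∉ S := fun h => ha ((Finset.mem_powersetCard.1 hS).1 h)
    obtain ⟨T, _, rfl⟩ := Finset.mem_image.1 hS'
    exact haS (Finset.mem_insert_self a T)

/-- Recurrence splitting off the last variable. -/
private lemma EE_succ_last {Ω : Type*} [CommSemiring Ω] (q : ℕ) (α : Ω) (n i : ℕ) :
    EE q α (n + 1) (i + 1) = EE q α n (i + 1) + α ^ q ^ n * EE q α n i := by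
  unfold EE
  rw [Finset.range_add_one, sum_powersetCard_insert (by simp)]

private lemma range_succ_eq_insert_zero (n : ℕ) :
    Finset.range (n + 1)
      = insert 0 ((Finset.range n).map ⟨Nat.succ, Nat.succ_injective⟩) := by
  ext j
  simp only [Finset.mem_range, Finset.mem_insert, Finset.mem_map, Function.Embedding.coeFn_mk]
  constructor
  · intro h
    rcases Nat.eq_zero_or_pos j with rfl | hj
    · exact Or.inl rfl
    · exact Or.inr ⟨j - 1, by omega, by omega⟩
  · rintro (rfl | ⟨k, hk, rfl⟩) <;> omega

/-- Recurrence splitting off the first variable. -/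
private lemma EE_succ_first {Ω : Type*} [CommSemiring Ω] (q : ℕ) (α : Ω) (n i : ℕ) :
    EE q α (n + 1) (i + 1) = EE q (α ^ q) n (i + 1) + α * EE q (α ^ q) n i := by
  unfold EE
  rw [range_succ_eq_insert_zero, sum_powersetCard_insert (by simp)]
  have key : ∀ k : ℕ,
      ∑ S ∈ ((Finset.range n).map ⟨Nat.succ, Nat.succ_injective⟩).powersetCard k,
          ∏ j ∈ S, α ^ q ^ j
        = ∑ S ∈ (Finset.range n).powersetCard k, ∏ j ∈ S, (α ^ q) ^ q ^ j := by
    intro k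
    rw [Finset.powersetCard_map, Finset.sum_map]
    refine Finset.sum_congr rfl fun S _ => ?_
    have hS : (Finset.mapEmbedding (⟨Nat.succ, Nat.succ_injective⟩ : ℕ ↪ ℕ)).toEmbedding S
        = S.map ⟨Nat.succ, Nat.succ_injective⟩ := rfl
    rw [hS, Finset.prod_map]
    refine Finset.prod_congr rfl fun j _ => ?_
    simp only [Function.Embedding.coeFn_mk]
    rw [pow_succ', pow_mul]
  rw [key, key, pow_zero, pow_one]

/-- Frobenius commutation: `(E q α n i)^q = E q (α^q) n i` in characteristic `p`, `q = p^m`. -/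
private lemma EE_pow_q {Ω : Type*} [CommRing Ω] {p : ℕ} [Fact p.Prime] [CharP Ω p]
    (m q : ℕ) (hq : q = p ^ m) (α : Ω) (n i : ℕ) :
    (EE q α n i) ^ q = EE q (α ^ q) n i := by
  subst hq
  have : (EE (p ^ m) α n i) ^ p ^ m = iterateFrobenius Ω p m (EE (p ^ m) α n i) := rfl
  rw [this]
  unfold EE
  rw [map_sum]
  refine Finset.sum_congr rfl fun S _ => ?_
  rw [map_prod]
  refine Finset.prod_congr rfl fun j _ => ?_
  rw [iterateFrobenius_def, ← pow_mul, ← pow_mul, pow_right_comm, pow_mul]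

private lemma main_lemma {p : ℕ} (m q : ℕ) (hp : p.Prime) (hq : q = p ^ m)
    {Ω : Type*} [Field Ω] [CharP Ω p] (α : Ω) :
    ∀ i n : ℕ, 1 ≤ i → i ≤ n → EE q α n i = 0 →
      ∃ k : ℕ, n - i + 1 ≤ k ∧ k ≤ n ∧ α ^ q ^ k = α := by
  haveI : Fact p.Prime := ⟨hp⟩
  have hq0 : q ≠ 0 := by subst hq; exact (pow_pos hp.pos m).ne'
  intro i
  induction i with
  | zero => intro n h; omega
  | succ i ih =>
    intro n _ hin h
    obtain ⟨n, rfl⟩ : ∃ n', n = n' + 1 := ⟨n - 1, by omega⟩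
    set A := EE q α n (i + 1) with hA
    set B := EE q α n i with hB
    have h3 : A + α ^ q ^ n * B = 0 := by
      rw [hA, hB, ← EE_succ_last, h]
    have h4 : A ^ q + α * B ^ q = 0 := by
      rw [EE_pow_q m q hq, EE_pow_q m q hq, ← EE_succ_first, h]
    by_cases hBz : B = 0
    · -- then A = 0, induct
      have hAz : A = 0 := by
        have : A ^ q = 0 := by
          rw [hBz, zero_pow hq0, mul_zero, add_zero] at h4; exact h4
        exact pow_eq_zero_iff hq0 |>.1 this
      rcases Nat.eq_zero_or_pos i with rfl | hi
      · exfalso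
        rw [hB, EE_zero] at hBz
        exact one_ne_zero hBz
      · obtain ⟨k, hk1, hk2, hk3⟩ := ih n hi (by omega) hBz
        exact ⟨k, by omega, by omega, hk3⟩
    · -- α^{q^{n+1}} = α
      refine ⟨n + 1, by omega, le_rfl, ?_⟩
      have e1 : α ^ q ^ n * B = -A := by linear_combination h3
      have e2 : α * B ^ q = -A ^ q := by linear_combination h4
      have e3 : (α ^ q ^ n * B) ^ q = (-A) ^ q := by rw [e1]
      have e4 : α ^ q ^ (n + 1) * B ^ q = -A ^ q := by
        have hfrob : (-A : Ω) ^ q = -(A ^ q) := by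
          subst hq
          have : (-A : Ω) ^ p ^ m = iterateFrobenius Ω p m (-A) := rfl
          rw [this, map_neg, iterateFrobenius_def]
        rw [mul_pow, ← pow_mul, ← pow_succ, hfrob] at e3
        exact e3
      have : α ^ q ^ (n + 1) * B ^ q = α * B ^ q := by rw [e4, e2]
      have hBq : B ^ q ≠ 0 := pow_ne_zero _ hBz
      exact mul_right_cancel₀ hBq this

/-- every root of `s_{n,i}` lies in a field `F_{q^k}` with
`n − i + 1 ≤ k ≤ n`, i.e. satisfies `α^{q^k} = α` for some such `k`. -/
theorem root_of_sPoly_mem_Fqk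
    (p m q n i : ℕ) (hp : p.Prime) (hm : 1 ≤ m) (hq : q = p ^ m)
    (hn : 1 ≤ n) (hi1 : 1 ≤ i) (hin : i ≤ n)
    (Ω : Type*) [Field Ω] [IsAlgClosed Ω] [CharP Ω p]
    (α : Ω) (hroot : (sPoly q n i Ω).IsRoot α) :
    ∃ k : ℕ, n - i + 1 ≤ k ∧ k ≤ n ∧ α ^ q ^ k = α := by
  apply main_lemma m q hp hq α i n hi1 hin
  have key : (sPoly q n i Ω).eval α = EE q α n i := by
    unfold sPoly EE
    rw [Polynomial.eval_finset_sum]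
    have huniv : (Finset.range n) = (Finset.univ : Finset (Fin n)).map Fin.valEmbedding := by
      rw [Fin.map_valEmbedding_univ, Nat.Iio_eq_range]
    rw [huniv, Finset.powersetCard_map, Finset.sum_map]
    refine Finset.sum_congr rfl fun S _ => ?_
    rw [Polynomial.eval_pow, Polynomial.eval_X]
    have hS : (Finset.mapEmbedding Fin.valEmbedding).toEmbedding S
        = S.map Fin.valEmbedding := rfl
    rw [hS, Finset.prod_map]
    simp only [Fin.valEmbedding_apply]
    rw [Finset.prod_pow_eq_pow_sum]
  rw [← key]
  exact hroot
end

section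
/- Let q be a prime power, n ≥ 2 an integer, 2 ≤ i ≤ n, and K a finite field with q^n elements. Then the number of pairs (x, y) ∈ K × K satisfying y^{q^{n−1}} + y^{q^{n−2}} + ⋯ + y^q + y = s_{n,i}(x) is exactly q^{2n−1}. In particular, this count is independent of the choice of i. -/
/-- The `i`-th `(n,q)`-elementary symmetric polynomial evaluated at `α`:
`s_{n,i}(α) = Σ_{S ⊆ {0,…,n−1}, |S| = i} α^(Σ_{j∈S} q^j)`. -/
def sElem (q n i : ℕ) {K : Type*} [CommSemiring K] (α : K) : K :=
  ∑ S ∈ Finset.powersetCard i (Finset.univ : Finset (Fin n)),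
    α ^ (∑ j ∈ S, q ^ (j : ℕ))

open Finset Polynomial in
private lemma sElem_pow_fix {K : Type*} [Field K] [Fintype K] {p k : ℕ} [Fact p.Prime]
    [CharP K p] (n i : ℕ) (hn : 0 < n) (hK : Fintype.card K = (p ^ k) ^ n) (x : K) :
    sElem (p ^ k) n i x ^ (p ^ k) = sElem (p ^ k) n i x := by
  haveI : NeZero n := ⟨by omega⟩
  set q := p ^ k with hq
  have hmod : ∀ (j : Fin n), x ^ q ^ (((j + 1 : Fin n) : ℕ)) = x ^ q ^ ((j : ℕ) + 1) := by
    intro j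
    have hv : ((j + 1 : Fin n) : ℕ) = ((j : ℕ) + 1) % n := by
      rw [Fin.val_add, Fin.val_one', Nat.add_mod (j:ℕ) (1 % n) n,
        Nat.mod_mod_of_dvd 1 dvd_rfl, ← Nat.add_mod]
    rw [hv]
    rcases lt_or_eq_of_le (show (j:ℕ) + 1 ≤ n from j.2) with h | h
    · rw [Nat.mod_eq_of_lt h]
    · rw [h, Nat.mod_self, pow_zero, pow_one, ← hK, FiniteField.pow_card]
  unfold sElem
  rw [hq, sum_pow_char_pow]
  refine Finset.sum_equiv (Equiv.finsetCongr (Equiv.addRight (1 : Fin n))) ?_ ?_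
  · intro S
    simp [Finset.mem_powersetCard_univ, Finset.card_map]
  · intro S hS
    rw [← hq, ← pow_mul, Finset.sum_mul]
    rw [← Finset.prod_pow_eq_pow_sum, ← Finset.prod_pow_eq_pow_sum]
    rw [Equiv.finsetCongr_apply, Finset.prod_map]
    refine Finset.prod_congr rfl ?_
    intro j _
    simp only [Equiv.coe_toEmbedding, Equiv.coe_addRight]
    rw [hmod j, ← pow_succ]

open Finset Polynomial in
/-- over the finite field `K` with `q^n` elements, the number of pairs
`(x, y) ∈ K × K` with `y^{q^{n−1}} + ⋯ + y^q + y = s_{n,i}(x)` is exactly `q^{2n−1}`,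
independently of `i` with `2 ≤ i ≤ n`. -/
theorem card_affine_points_symmetric_eq
    (q n i : ℕ) (hq : IsPrimePow q) (hn : 2 ≤ n) (hi2 : 2 ≤ i) (hin : i ≤ n)
    (K : Type*) [Field K] [Fintype K] [DecidableEq K] (hK : Fintype.card K = q ^ n) :
    ((Finset.univ : Finset (K × K)).filter
        (fun pr => ∑ j ∈ Finset.range n, pr.2 ^ q ^ j = sElem q n i pr.1)).card
      = q ^ (2 * n - 1) := by
  classical
  obtain ⟨p, k, hpp, hk, rfl⟩ := hq
  have hp : Fact p.Prime := ⟨hpp.nat_prime⟩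
  set q := p ^ k with hq
  have hq2 : 2 ≤ q := by
    calc 2 ≤ p := hp.out.two_le
    _ = p ^ 1 := (pow_one p).symm
    _ ≤ p ^ k := Nat.pow_le_pow_right hp.out.pos hk
  have hq0 : 0 < q := by omega
  -- characteristic
  have hchar : CharP K p := by
    have h1 : ((Fintype.card K : ℕ) : K) = 0 := FiniteField.cast_card_eq_zero K
    have hmn : k * n ≠ 0 := by positivity
    rw [hK, hq, ← pow_mul, Nat.cast_pow] at h1
    have hp0 : (p : K) = 0 := pow_eq_zero_iff hmn |>.mp h1
    have hd : ringChar K ∣ p := ringChar.dvd hp0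
    have hne : ringChar K ≠ 1 := CharP.ringChar_ne_one
    have : ringChar K = p := ((hp.out.eq_one_or_self_of_dvd _ hd).resolve_left hne)
    exact this ▸ ringChar.charP K
  -- the additive map T
  set T : K → K := fun y => ∑ j ∈ Finset.range n, y ^ q ^ j with hT
  have hTsub : ∀ a b : K, T (a - b) = T a - T b := by
    intro a b
    simp only [hT, ← Finset.sum_sub_distrib]
    refine Finset.sum_congr rfl fun j _ => ?_
    rw [hq, show (p ^ k) ^ j = p ^ (k * j) from (pow_mul p k j).symm]
    exact sub_pow_char_pow a b (k * j)
  have hTfix : ∀ y : K, (T y) ^ q = T y := by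
    intro y
    have h1 : (T y) ^ q = ∑ j ∈ Finset.range n, y ^ q ^ (j + 1) := by
      rw [hT, hq, sum_pow_char_pow]
      refine Finset.sum_congr rfl fun j _ => ?_
      rw [← hq, ← pow_mul, ← pow_succ]
    have h2 : ∑ j ∈ Finset.range n, y ^ q ^ (j + 1) + y ^ q ^ 0
        = ∑ j ∈ Finset.range n, y ^ q ^ j + y ^ q ^ n := by
      rw [← Finset.sum_range_succ' (fun j => y ^ q ^ j) n, Finset.sum_range_succ]
    rw [← hK, FiniteField.pow_card, pow_zero, pow_one] at h2
    have := add_right_cancel h2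
    rw [h1, this, hT]
  -- kernel bound
  set ker : Finset K := Finset.univ.filter (fun y => T y = 0) with hker
  have hker_card : ker.card ≤ q ^ (n - 1) := by
    set P : K[X] := ∑ j ∈ Finset.range n, (X : K[X]) ^ q ^ j with hP
    have hPc : P.coeff 1 = 1 := by
      rw [hP, Polynomial.finset_sum_coeff]
      rw [Finset.sum_eq_single 0]
      · simp [Polynomial.coeff_X_pow]
      · intro j hj hj0
        rw [Polynomial.coeff_X_pow]
        have : 2 ≤ q ^ j := le_trans hq2 (Nat.le_self_pow hj0 q)
        exact if_neg (by omega)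
      · intro h
        exact absurd (Finset.mem_range.mpr (by omega)) h
    have hPne : P ≠ 0 := fun h => by simp [h] at hPc
    have hdeg : P.natDegree ≤ q ^ (n - 1) := by
      refine Polynomial.natDegree_sum_le_of_forall_le _ _ fun j hj => ?_
      rw [Polynomial.natDegree_X_pow]
      exact Nat.pow_le_pow_right hq0 (by have := Finset.mem_range.mp hj; omega)
    refine le_trans (Polynomial.card_le_degree_of_subset_roots ?_) hdeg
    intro y hy
    rw [Finset.mem_val, hker, Finset.mem_filter] at hy
    rw [Polynomial.mem_roots hPne]
    have : P.eval y = T y := by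
      rw [hP, Polynomial.eval_finset_sum]
      simp [hT]
    simpa [Polynomial.IsRoot, this] using hy.2
  -- fixed-point set bound
  set Fs : Finset K := Finset.univ.filter (fun z => z ^ q = z) with hFs
  have hFs_card : Fs.card ≤ q := by
    set Q : K[X] := (X : K[X]) ^ q - X with hQ
    have hQc : Q.coeff q = 1 := by
      simp [hQ, Polynomial.coeff_X_pow, Polynomial.coeff_X, (show ¬ (1 = q) by omega)]
    have hQne : Q ≠ 0 := fun h => by simp [h] at hQc
    have hdeg : Q.natDegree ≤ q := by
      refine le_trans (Polynomial.natDegree_sub_le _ _) ?_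
      simp only [Polynomial.natDegree_X_pow, Polynomial.natDegree_X]
      omega
    refine le_trans (Polynomial.card_le_degree_of_subset_roots ?_) hdeg
    intro z hz
    rw [Finset.mem_val, hFs, Finset.mem_filter] at hz
    rw [Polynomial.mem_roots hQne]
    simp only [Polynomial.IsRoot, hQ, Polynomial.eval_sub, Polynomial.eval_pow,
      Polynomial.eval_X]
    rw [hz.2, sub_self]
  -- image of T is inside Fs
  have himg_sub : Finset.univ.image T ⊆ Fs := by
    intro z hz
    obtain ⟨y, _, rfl⟩ := Finset.mem_image.mp hz
    rw [hFs, Finset.mem_filter]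
    exact ⟨Finset.mem_univ _, hTfix y⟩
  -- fibers over image points have the same cardinality as ker
  have hfiber : ∀ c : K, c ∈ Finset.univ.image T →
      (Finset.univ.filter (fun y => T y = c)).card = ker.card := by
    intro c hc
    obtain ⟨y₀, _, hy₀⟩ := Finset.mem_image.mp hc
    refine Finset.card_bij' (fun y _ => y - y₀) (fun z _ => z + y₀) ?_ ?_ ?_ ?_
    · intro y hy
      rw [Finset.mem_filter] at hy ⊢
      refine ⟨Finset.mem_univ _, ?_⟩
      rw [hTsub, hy.2, hy₀, sub_self]
    · intro z hz
      rw [hker, Finset.mem_filter] at hz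
      rw [Finset.mem_filter]
      refine ⟨Finset.mem_univ _, ?_⟩
      have h3 : T (z + y₀) - T y₀ = T z := by rw [← hTsub, add_sub_cancel_right]
      rw [hz.2] at h3
      rw [← hy₀]
      exact sub_eq_zero.mp h3
    · intro y _; ring
    · intro z _; ring
  -- counting: card K = (image).card * ker.card
  have hcount : Fintype.card K = (Finset.univ.image T).card * ker.card := by
    rw [← Finset.card_univ, Finset.card_eq_sum_card_image T Finset.univ]
    rw [Finset.sum_congr rfl (fun c hc => hfiber c hc), Finset.sum_const, smul_eq_mul]
  -- deduce exact cardinalities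
  have himg_le : (Finset.univ.image T).card ≤ q := le_trans (Finset.card_le_card himg_sub) hFs_card
  have hsplit : q ^ n = q * q ^ (n - 1) := by
    rw [← pow_succ']
    congr 1
    omega
  have hprod : (Finset.univ.image T).card * ker.card = q * q ^ (n - 1) := by
    rw [← hcount, hK, ← hsplit]
  have hT0 : T 0 = 0 := by
    rw [hT]
    exact Finset.sum_eq_zero fun j _ => zero_pow (by positivity)
  have hkpos : 0 < ker.card := Finset.card_pos.mpr ⟨0, by
    rw [hker, Finset.mem_filter]; exact ⟨Finset.mem_univ _, hT0⟩⟩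
  have himg_eq1 : (Finset.univ.image T).card = q := by
    by_contra hne
    have hlt : (Finset.univ.image T).card < q := lt_of_le_of_ne himg_le hne
    have h5 : (Finset.univ.image T).card * ker.card < q * ker.card :=
      (Nat.mul_lt_mul_right hkpos).mpr hlt
    have h6 : q * ker.card ≤ q * q ^ (n - 1) := Nat.mul_le_mul_left q hker_card
    omega
  have himg_eq2 : ker.card = q ^ (n - 1) := by
    rw [himg_eq1] at hprod
    exact Nat.eq_of_mul_eq_mul_left hq0 hprod
  have hFs_eq : Finset.univ.image T = Fs :=
    Finset.eq_of_subset_of_card_le himg_sub (le_trans hFs_card (le_of_eq himg_eq1.symm))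
  -- each sElem value is in the image
  have hs_mem : ∀ x : K, sElem q n i x ∈ Finset.univ.image T := by
    intro x
    rw [hFs_eq, hFs, Finset.mem_filter]
    exact ⟨Finset.mem_univ _, sElem_pow_fix n i (by omega) (hq ▸ hK) x⟩
  -- main computation
  rw [Finset.card_eq_sum_card_fiberwise (f := Prod.fst) (t := Finset.univ)
    (fun x _ => Finset.mem_univ _)]
  have hxfiber : ∀ x : K,
      (((Finset.univ : Finset (K × K)).filter
        (fun pr => ∑ j ∈ Finset.range n, pr.2 ^ q ^ j = sElem q n i pr.1)).filter
          (fun pr => pr.1 = x)).card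
      = (Finset.univ.filter (fun y => T y = sElem q n i x)).card := by
    intro x
    refine Finset.card_bij' (fun pr _ => pr.2) (fun y _ => (x, y)) ?_ ?_ ?_ ?_
    · intro pr hpr
      simp only [Finset.mem_filter, Finset.mem_univ, true_and] at hpr ⊢
      obtain ⟨h1, h2⟩ := hpr
      exact h2 ▸ h1
    · intro y hy
      simp only [Finset.mem_filter, Finset.mem_univ, true_and] at hy ⊢
      exact ⟨hy, trivial⟩
    · intro pr hpr
      simp only [Finset.mem_filter] at hpr
      exact Prod.ext hpr.2.symm rfl
    · intro y _; rfl
  calc ∑ x ∈ Finset.univ, (((Finset.univ : Finset (K × K)).filter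
        (fun pr => ∑ j ∈ Finset.range n, pr.2 ^ q ^ j = sElem q n i pr.1)).filter
          (fun pr => pr.1 = x)).card
      = ∑ x ∈ Finset.univ, (q ^ (n-1) : ℕ) := by
        refine Finset.sum_congr rfl fun x _ => ?_
        rw [hxfiber x, hfiber _ (hs_mem x), himg_eq2]
    _ = Fintype.card K * q ^ (n - 1) := by rw [Finset.sum_const, smul_eq_mul, Finset.card_univ]
    _ = q ^ (2 * n - 1) := by rw [hK, ← pow_add]; congr 1; omega
end

section
/- Let q be a prime power, n ≥ 1 an integer, and K a finite field with q^n elements. Let f ∈ K[t] be a polynomial of degree < q^n. Then the following are equivalent: (1) f is (n,q)-quasi-symmetric, i.e., there exists a polynomial F in n variables over K that is fixed by the cyclic permutation of the variables (the n-cycle sending variable j to variable j+1 mod n) such that f(t) = F(t, t^q, t^{q^2}, …, t^{q^{n−1}}) as polynomials in K[t]; (2) t^{q^n} − t divides f(t^q) − f(t) in K[t]. -/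
/-!
Write `Φ F = F(t, t^q, …, t^{q^{n-1}})`. Since `t^{q^n} ≡ t` modulo `P = t^{q^n} - t`, rotating the
variables of `F` amounts, modulo `P`, to substituting `t^q` into `Φ F`; this gives one direction.
Conversely, the base-`q` digits of the exponents give a lift of `f` all of whose exponents are
`< q`. Its rotation is again such a polynomial, and its image under `Φ` has degree `< q^n` and is
`≡ f(t^q) ≡ f` modulo `P`, hence equals `f`. As `Φ` is injective on polynomials with exponents
`< q`, the lift is rotation invariant.
-/
open Polynomial

noncomputable def reducedPolynomial {ι K : Type*} [Fintype ι] [DecidableEq ι] [CommSemiring K]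
    {q : ℕ} (a : (ι → Fin q) → K) : MvPolynomial ι K :=
  ∑ e, MvPolynomial.C (a e) * ∏ i, MvPolynomial.X i ^ (e i : ℕ)

theorem rename_reducedPolynomial {ι K : Type*} [Fintype ι] [DecidableEq ι] [CommSemiring K]
    {q : ℕ} (σ : ι ≃ ι) (a : (ι → Fin q) → K) :
    MvPolynomial.rename σ (reducedPolynomial a) = reducedPolynomial fun e => a (e ∘ σ) := by
  simp only [reducedPolynomial, map_sum, map_mul, MvPolynomial.rename_C, map_prod, map_pow,
    MvPolynomial.rename_X]
  refine Fintype.sum_equiv (σ.arrowCongr (Equiv.refl (Fin q))) _ _ fun e => ?_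
  conv_rhs => rw [← σ.prod_comp]
  simp [Equiv.arrowCongr_apply, Function.comp_def]

theorem aeval_reducedPolynomial {K : Type*} [CommSemiring K] {q n : ℕ}
    (a : (Fin n → Fin q) → K) :
    MvPolynomial.aeval (fun j : Fin n => (X : K[X]) ^ q ^ (j : ℕ)) (reducedPolynomial a) =
      ((degreeLTEquiv K (q ^ n)).symm (a ∘ finFunctionFinEquiv.symm) : K[X]) := by
  change _ = ∑ m : Fin (q ^ n), monomial m (a (finFunctionFinEquiv.symm m))
  rw [← finFunctionFinEquiv.sum_comp]
  simp only [reducedPolynomial, map_sum, map_mul, MvPolynomial.aeval_C, map_prod, map_pow,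
    MvPolynomial.aeval_X, ← pow_mul, Finset.prod_pow_eq_pow_sum, Equiv.symm_apply_apply,
    finFunctionFinEquiv_apply, algebraMap_eq, C_mul_X_pow_eq_monomial, mul_comm]

theorem degree_aeval_reducedPolynomial_lt {K : Type*} [CommSemiring K] {q n : ℕ}
    (a : (Fin n → Fin q) → K) :
    (MvPolynomial.aeval (fun j : Fin n => (X : K[X]) ^ q ^ (j : ℕ)) (reducedPolynomial a)).degree <
      (q ^ n : ℕ) := by
  rw [aeval_reducedPolynomial]
  exact mem_degreeLT.1 (Subtype.prop _)

theorem aeval_reducedPolynomial_injective {K : Type*} [CommSemiring K] {q n : ℕ} :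
    Function.Injective fun a : (Fin n → Fin q) → K =>
      MvPolynomial.aeval (fun j : Fin n => (X : K[X]) ^ q ^ (j : ℕ)) (reducedPolynomial a) := by
  intro a b hab
  simp only [aeval_reducedPolynomial, Subtype.val_inj, EmbeddingLike.apply_eq_iff_eq] at hab
  funext e
  simpa using congrFun hab (finFunctionFinEquiv e)

theorem aeval_reducedPolynomial_coeff_eq_self {K : Type*} [CommSemiring K] {q n : ℕ} {f : K[X]}
    (hf : f.degree < (q ^ n : ℕ)) :
    MvPolynomial.aeval (fun j : Fin n => (X : K[X]) ^ q ^ (j : ℕ))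
      (reducedPolynomial fun e : Fin n → Fin q => f.coeff (finFunctionFinEquiv e)) = f := by
  rw [aeval_reducedPolynomial]
  convert congrArg Subtype.val
    ((degreeLTEquiv K (q ^ n)).symm_apply_apply ⟨f, mem_degreeLT.2 hf⟩)
  funext m
  simp only [Function.comp_apply, Equiv.apply_symm_apply]
  rfl

theorem pow_pow_finRotate {M : Type*} [Monoid M] {q n : ℕ} {x : M} (hx : x ^ q ^ n = x)
    (j : Fin n) : x ^ q ^ (finRotate n j : ℕ) = (x ^ q) ^ q ^ (j : ℕ) := by
  obtain _ | k := n
  · exact j.elim0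
  rw [coe_finRotate, ← pow_mul, ← pow_succ']
  split_ifs with hj
  · rw [hj, Fin.val_last, hx, pow_zero, pow_one]
  · rfl

theorem aeval_pow_pow_rename_finRotate {K A : Type*} [CommSemiring K] [CommSemiring A]
    [Algebra K A] {q n : ℕ} {x : A} (hx : x ^ q ^ n = x) (F : MvPolynomial (Fin n) K) :
    MvPolynomial.aeval (fun j : Fin n => x ^ q ^ (j : ℕ)) (MvPolynomial.rename (finRotate n) F) =
      MvPolynomial.aeval (fun j : Fin n => (x ^ q) ^ q ^ (j : ℕ)) F := by
  rw [MvPolynomial.aeval_rename]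
  exact congrArg (MvPolynomial.aeval · F) (funext (pow_pow_finRotate hx))

theorem X_pow_sub_X_dvd_comp_sub_aeval_rename {K : Type*} [CommRing K] (q n : ℕ)
    (F : MvPolynomial (Fin n) K) :
    (X ^ q ^ n - X : K[X]) ∣
      (MvPolynomial.aeval (fun j : Fin n => (X : K[X]) ^ q ^ (j : ℕ)) F).comp (X ^ q) -
        MvPolynomial.aeval (fun j : Fin n => (X : K[X]) ^ q ^ (j : ℕ))
          (MvPolynomial.rename (finRotate n) F) := by
  have hroot : AdjoinRoot.root (X ^ q ^ n - X : K[X]) ^ q ^ n = AdjoinRoot.root _ := by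
    have h := AdjoinRoot.mk_self (f := (X ^ q ^ n - X : K[X]))
    rwa [map_sub, map_pow, AdjoinRoot.mk_X, sub_eq_zero] at h
  rw [← AdjoinRoot.mk_eq_mk, ← AdjoinRoot.aeval_eq, ← AdjoinRoot.aeval_eq]
  simp only [aeval_comp, MvPolynomial.comp_aeval_apply, map_pow, aeval_X]
  rw [aeval_pow_pow_rename_finRotate hroot]

theorem eq_of_X_pow_sub_X_dvd_sub {R : Type*} [CommRing R] [IsDomain R] {N : ℕ} (hN : 1 < N)
    {p p' : R[X]} (hp : p.degree < N) (hp' : p'.degree < N) (h : (X ^ N - X : R[X]) ∣ p - p') :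
    p = p' := by
  have hdeg : (X ^ N - X : R[X]).degree = N := by
    rw [degree_sub_eq_left_of_degree_lt] <;> simp [hN]
  exact sub_eq_zero.1 <| eq_zero_of_dvd_of_degree_lt h <|
    hdeg ▸ (degree_sub_le p p').trans_lt (max_lt hp hp')

theorem quasiSymmetric_iff_frobenius_invariant_general
    (q n : ℕ) (hq : IsPrimePow q) (hn : 1 ≤ n)
    (K : Type*) [Field K]
    (f : Polynomial K) (hdeg : f.natDegree < q ^ n) :
    (∃ F : MvPolynomial (Fin n) K,
        MvPolynomial.rename (finRotate n) F = F ∧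
        MvPolynomial.aeval
          (fun j : Fin n => (Polynomial.X : Polynomial K) ^ q ^ (j : ℕ)) F = f) ↔
      (Polynomial.X ^ q ^ n - Polynomial.X : Polynomial K) ∣
        (f.comp (Polynomial.X ^ q) - f) := by
  constructor
  · rintro ⟨F, hrot, rfl⟩
    have hcongr := X_pow_sub_X_dvd_comp_sub_aeval_rename q n F
    rwa [hrot] at hcongr
  · intro hdvd
    have hf : f.degree < (q ^ n : ℕ) := degree_le_natDegree.trans_lt (by exact_mod_cast hdeg)
    set a := fun e : Fin n → Fin q => f.coeff (finFunctionFinEquiv e)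
    have hlift := aeval_reducedPolynomial_coeff_eq_self hf
    refine ⟨reducedPolynomial a, ?_, hlift⟩
    have hcongr := X_pow_sub_X_dvd_comp_sub_aeval_rename q n (reducedPolynomial a)
    rw [hlift, rename_reducedPolynomial] at hcongr
    rw [rename_reducedPolynomial]
    refine congrArg reducedPolynomial (aeval_reducedPolynomial_injective ?_)
    refine (eq_of_X_pow_sub_X_dvd_sub (Nat.one_lt_pow (by omega) hq.two_le)
      (degree_aeval_reducedPolynomial_lt _) hf ?_).trans hlift.symm
    have hdiff := dvd_sub hdvd hcongr
    rwa [sub_sub_sub_cancel_left] at hdiff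

/-- a polynomial `f ∈ K[t]` of degree `< q^n` over the finite field `K` with
`q^n` elements is `(n,q)`-quasi-symmetric (i.e. it is the evaluation at
`(t, t^q, …, t^{q^{n−1}})` of an `n`-variable polynomial fixed by the cyclic permutation of
the variables) iff `t^{q^n} − t` divides `f(t^q) − f(t)`. -/
theorem quasiSymmetric_iff_frobenius_invariant
    (q n : ℕ) (hq : IsPrimePow q) (hn : 1 ≤ n)
    (K : Type*) [Field K] [Fintype K] (hK : Fintype.card K = q ^ n)
    (f : Polynomial K) (hdeg : f.natDegree < q ^ n) :
    (∃ F : MvPolynomial (Fin n) K,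
        MvPolynomial.rename (finRotate n) F = F ∧
        MvPolynomial.aeval
          (fun j : Fin n => (Polynomial.X : Polynomial K) ^ q ^ (j : ℕ)) F = f) ↔
      (Polynomial.X ^ q ^ n - Polynomial.X : Polynomial K) ∣
        (f.comp (Polynomial.X ^ q) - f) :=
  quasiSymmetric_iff_frobenius_invariant_general q n hq hn K f hdeg
end

section
/- Let q be a prime power, n ≥ 2, and K a finite field with q^n elements. Suppose δ, τ ∈ K satisfy δ^{q^{n−1}} + δ^{q^{n−2}} + ⋯ + δ = s_{n,2}(τ). Then: (1) for every field L containing K and all a, b ∈ L with b^{q^{n−1}} + b^{q^{n−2}} + ⋯ + b = s_{n,2}(a), the pair a' = a + τ, b' = b + a·(τ^q + τ^{q^2} + ⋯ + τ^{q^{n−1}}) + δ again satisfies b'^{q^{n−1}} + ⋯ + b' = s_{n,2}(a'); and (2) this collection of maps acts transitively on the K-rational solutions: for any two pairs (a,b), (a',b') ∈ K × K each satisfying the equation, there exist τ, δ ∈ K with δ^{q^{n−1}} + ⋯ + δ = s_{n,2}(τ), a' = a + τ, and b' = b + a·(τ^q + ⋯ + τ^{q^{n−1}}) + δ. -/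
universe u v

namespace HermAux

open Finset

/-- The "trace-like" sum `x + x^q + ⋯ + x^{q^{n-1}}`. -/
def tr (q n : ℕ) {L : Type*} [CommSemiring L] (x : L) : L :=
  ∑ j ∈ Finset.range n, x ^ q ^ j

lemma pair_of_card_two {α : Type*} [DecidableEq α] {S : Finset α} (hS : S.card = 2)
    {a b : α} (ha : a ∈ S) (hb : b ∈ S) (hab : a ≠ b) : S = {a, b} := by
  refine (Finset.eq_of_subset_of_card_le ?_ ?_).symm
  · intro x hx
    rcases Finset.mem_insert.mp hx with h | h
    · exact h ▸ ha
    · exact (Finset.mem_singleton.mp h) ▸ hb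
  · rw [hS, Finset.card_insert_of_notMem (by simpa using hab), Finset.card_singleton]

lemma sum_powersetCard_two_offDiag {M : Type*} [AddCommMonoid M] {α : Type*} [DecidableEq α]
    [Fintype α] (f : α → α → M) :
    ∑ S ∈ powersetCard 2 (univ : Finset α), ∑ p ∈ S.offDiag, f p.1 p.2
      = ∑ p ∈ (univ : Finset α).offDiag, f p.1 p.2 := by
  rw [← Finset.sum_biUnion ?hd]
  case hd =>
    intro S hS T hT hST
    simp only [Finset.mem_coe, Finset.mem_powersetCard_univ] at hS hT
    refine Finset.disjoint_left.mpr fun p hpS hpT => hST ?_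
    rw [Finset.mem_offDiag] at hpS hpT
    rw [pair_of_card_two hS hpS.1 hpS.2.1 hpS.2.2, ← pair_of_card_two hT hpT.1 hpT.2.1 hpT.2.2]
  congr 1
  ext p
  simp only [Finset.mem_biUnion, Finset.mem_powersetCard_univ, Finset.mem_offDiag,
    Finset.mem_univ, true_and]
  constructor
  · rintro ⟨S, -, -, -, h⟩; exact h
  · intro hne
    refine ⟨{p.1, p.2}, ?_, by simp, by simp, hne⟩
    rw [Finset.card_insert_of_notMem (by simpa using hne), Finset.card_singleton]

lemma offDiag_pair {α : Type*} [DecidableEq α] {a b : α} (hab : a ≠ b) :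
    ({a, b} : Finset α).offDiag = {(a, b), (b, a)} := by
  ext ⟨x, y⟩
  simp only [Finset.mem_offDiag, Finset.mem_insert, Finset.mem_singleton, Prod.mk.injEq]
  constructor
  · rintro ⟨hx | hx, hy | hy, hxy⟩ <;> subst hx <;> subst hy <;> simp_all
  · rintro (⟨rfl, rfl⟩ | ⟨rfl, rfl⟩) <;> simp [hab, hab.symm]

section FieldLemmas

variable {L : Type*} [Field L] {p k q n : ℕ} [Fact p.Prime] [CharP L p] (hq : q = p ^ k)
include hq

lemma frob_add (x y : L) (j : ℕ) : (x + y) ^ q ^ j = x ^ q ^ j + y ^ q ^ j := by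
  subst hq
  rw [show (p ^ k) ^ j = p ^ (k * j) from (pow_mul p k j).symm]
  exact add_pow_char_pow x y p (k * j)

lemma frob_sub (x y : L) (j : ℕ) : (x - y) ^ q ^ j = x ^ q ^ j - y ^ q ^ j := by
  subst hq
  rw [show (p ^ k) ^ j = p ^ (k * j) from (pow_mul p k j).symm]
  exact sub_pow_char_pow x y (k * j)

lemma tr_add (x y : L) : tr q n (x + y) = tr q n x + tr q n y := by
  unfold tr
  rw [← Finset.sum_add_distrib]
  exact Finset.sum_congr rfl fun j _ => frob_add hq x y j

lemma tr_sub (x y : L) : tr q n (x - y) = tr q n x - tr q n y := by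
  unfold tr
  rw [← Finset.sum_sub_distrib]
  exact Finset.sum_congr rfl fun j _ => frob_sub hq x y j

lemma tr_pow_q {t : L} (ht : t ^ q ^ n = t) : (tr q n t) ^ q = tr q n t := by
  have h1 : (tr q n t) ^ q = ∑ j ∈ Finset.range n, t ^ q ^ (j + 1) := by
    subst hq
    rw [tr, sum_pow_char_pow]
    exact Finset.sum_congr rfl fun j _ => by rw [← pow_mul, pow_succ]
  rw [h1]
  have h2 : (∑ j ∈ Finset.range n, t ^ q ^ (j + 1)) + t ^ q ^ 0
      = tr q n t + t ^ q ^ n := by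
    rw [tr, ← Finset.sum_range_succ' (fun j => t ^ q ^ j) n, Finset.sum_range_succ]
  rw [ht, pow_zero, pow_one] at h2
  have h2' : (∑ j ∈ Finset.range n, t ^ q ^ (j + 1)) + t = tr q n t + t := by
    simpa using h2
  exact add_right_cancel h2'

lemma ico_pow (hn : 0 < n) {t : L} (ht : t ^ q ^ n = t) (j : ℕ) :
    (∑ i ∈ Finset.Ico 1 n, t ^ q ^ i) ^ q ^ j = tr q n t - t ^ q ^ j := by
  induction j with
  | zero =>
    rw [pow_zero, pow_one, tr, Finset.range_eq_Ico, Finset.sum_eq_sum_Ico_succ_bot hn]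
    rw [pow_zero, pow_one]
    ring
  | succ j ih =>
    rw [pow_succ, pow_mul, ih]
    have h := frob_sub hq (tr q n t) (t ^ q ^ j) 1
    rw [pow_one] at h
    rw [h, tr_pow_q hq ht, ← pow_mul, ← pow_succ]

lemma tr_mul_ico (hn : 0 < n) (a : L) {t : L} (ht : t ^ q ^ n = t) :
    tr q n (a * ∑ i ∈ Finset.Ico 1 n, t ^ q ^ i) = tr q n a * tr q n t - tr q n (a * t) := by
  unfold tr
  rw [Finset.sum_mul, ← Finset.sum_sub_distrib]
  refine Finset.sum_congr rfl fun j _ => ?_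
  rw [mul_pow, ico_pow hq hn ht j, mul_pow]
  simp only [tr]
  ring

lemma sElem_add (x y : L) :
    sElem q n 2 (x + y) = sElem q n 2 x + sElem q n 2 y
      + (tr q n x * tr q n y - tr q n (x * y)) := by
  have step : ∀ S ∈ powersetCard 2 (univ : Finset (Fin n)),
      (x + y) ^ (∑ j ∈ S, q ^ (j : ℕ))
        = x ^ (∑ j ∈ S, q ^ (j : ℕ)) + y ^ (∑ j ∈ S, q ^ (j : ℕ))
          + ∑ p ∈ S.offDiag, x ^ q ^ (p.1 : ℕ) * y ^ q ^ (p.2 : ℕ) := by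
    intro S hS
    rw [Finset.mem_powersetCard_univ] at hS
    obtain ⟨i, j, hij, rfl⟩ := Finset.card_eq_two.mp hS
    have hne : ((i, j) : Fin n × Fin n) ≠ (j, i) := by
      intro h
      exact hij (congrArg Prod.fst h)
    rw [Finset.sum_pair hij, offDiag_pair hij, Finset.sum_pair hne]
    rw [pow_add, pow_add, pow_add, frob_add hq x y (i : ℕ), frob_add hq x y (j : ℕ)]
    ring
  unfold sElem
  rw [Finset.sum_congr rfl step, Finset.sum_add_distrib, Finset.sum_add_distrib,
    sum_powersetCard_two_offDiag (fun i j : Fin n => x ^ q ^ (i : ℕ) * y ^ q ^ (j : ℕ))]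
  congr 1
  have hprod : tr q n x * tr q n y
      = ∑ p ∈ ((univ : Finset (Fin n)) ×ˢ (univ : Finset (Fin n))),
          x ^ q ^ (p.1 : ℕ) * y ^ q ^ (p.2 : ℕ) := by
    rw [tr, tr, Finset.sum_range (fun j => x ^ q ^ j), Finset.sum_range (fun j => y ^ q ^ j),
      Finset.sum_mul_sum, Finset.sum_product]
  have hdiag : tr q n (x * y)
      = ∑ p ∈ (univ : Finset (Fin n)).diag, x ^ q ^ (p.1 : ℕ) * y ^ q ^ (p.2 : ℕ) := by
    rw [Finset.sum_diag, tr, Finset.sum_range (fun j => (x * y) ^ q ^ j)]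
    exact Finset.sum_congr rfl fun i _ => mul_pow x y _
  rw [hprod, hdiag, ← Finset.diag_union_offDiag (univ : Finset (Fin n)),
    Finset.sum_union (Finset.disjoint_diag_offDiag _)]
  ring

lemma solution_step (hn : 0 < n) (a b t d : L) (ht : t ^ q ^ n = t)
    (hd : tr q n d = sElem q n 2 t) (hb : tr q n b = sElem q n 2 a) :
    tr q n (b + a * (∑ i ∈ Finset.Ico 1 n, t ^ q ^ i) + d) = sElem q n 2 (a + t) := by
  rw [tr_add hq, tr_add hq, hb, hd, tr_mul_ico hq hn a ht, sElem_add hq]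
  ring

end FieldLemmas

end HermAux

open HermAux

/-- automorphisms of the generalized Hermitian equation
`y^{q^{n−1}} + ⋯ + y = s_{n,2}(x)`: for `δ, τ ∈ K` with `Tr(δ) = s_{n,2}(τ)`, the
substitution `(a, b) ↦ (a + τ, b + a(τ^q + ⋯ + τ^{q^{n−1}}) + δ)` maps solutions to
solutions over any field extension `L` of `K`, and these maps act transitively on the
`K`-rational solutions. -/
theorem generalized_hermitian_automorphisms
    (q n : ℕ) (hq : IsPrimePow q) (hn : 2 ≤ n)
    (K : Type u) [Field K] [Fintype K] (hK : Fintype.card K = q ^ n)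
    (δ τ : K) (hδτ : ∑ j ∈ Finset.range n, δ ^ q ^ j = sElem q n 2 τ) :
    (∀ (L : Type v) [Field L] [Algebra K L], ∀ a b : L,
        (∑ j ∈ Finset.range n, b ^ q ^ j = sElem q n 2 a) →
        ∑ j ∈ Finset.range n,
            (b + a * algebraMap K L (∑ j ∈ Finset.Ico 1 n, τ ^ q ^ j)
              + algebraMap K L δ) ^ q ^ j
          = sElem q n 2 (a + algebraMap K L τ)) ∧
    (∀ a b a' b' : K,
        (∑ j ∈ Finset.range n, b ^ q ^ j = sElem q n 2 a) →
        (∑ j ∈ Finset.range n, b' ^ q ^ j = sElem q n 2 a') →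
        ∃ τ' δ' : K,
          (∑ j ∈ Finset.range n, δ' ^ q ^ j = sElem q n 2 τ') ∧
          a' = a + τ' ∧
          b' = b + a * (∑ j ∈ Finset.Ico 1 n, τ' ^ q ^ j) + δ') := by
  obtain ⟨p, k, hpp, hk, hpk⟩ := hq
  have hq' : q = p ^ k := hpk.symm
  have hp : p.Prime := Nat.prime_iff.mpr hpp
  haveI : Fact p.Prime := ⟨hp⟩
  have hn0 : 0 < n := lt_of_lt_of_le two_pos hn
  -- char K = p
  obtain ⟨m, hrP, hm⟩ := FiniteField.card K (ringChar K)
  have hdvd : p ∣ (ringChar K) ^ (m : ℕ) := by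
    rw [← hm, hK, hq', ← pow_mul]
    exact dvd_pow (dvd_refl p) (Nat.mul_ne_zero hk.ne' hn0.ne')
  have hpr : p = ringChar K :=
    (Nat.prime_dvd_prime_iff_eq hp hrP).mp (hp.dvd_of_dvd_pow hdvd)
  haveI : CharP K p := hpr ▸ ringChar.charP K
  have hcard : ∀ x : K, x ^ q ^ n = x := by
    intro x
    rw [← hK]
    exact FiniteField.pow_card x
  constructor
  · intro L _ _ a b hab
    haveI : CharP L p := charP_of_injective_algebraMap (algebraMap K L).injective p
    have ht : (algebraMap K L τ) ^ q ^ n = algebraMap K L τ := by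
      rw [← map_pow, hcard τ]
    have hd : tr q n (algebraMap K L δ) = sElem q n 2 (algebraMap K L τ) := by
      have : tr q n (algebraMap K L δ) = algebraMap K L (tr q n δ) := by
        simp [tr, map_sum, map_pow]
      rw [this, show tr q n δ = sElem q n 2 τ from hδτ]
      simp [sElem, map_sum, map_pow]
    have hA : algebraMap K L (∑ j ∈ Finset.Ico 1 n, τ ^ q ^ j)
        = ∑ i ∈ Finset.Ico 1 n, (algebraMap K L τ) ^ q ^ i := by
      simp [map_sum, map_pow]
    rw [show (∑ j ∈ Finset.range n,
            (b + a * algebraMap K L (∑ j ∈ Finset.Ico 1 n, τ ^ q ^ j)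
              + algebraMap K L δ) ^ q ^ j)
        = tr q n (b + a * algebraMap K L (∑ j ∈ Finset.Ico 1 n, τ ^ q ^ j)
              + algebraMap K L δ) from rfl, hA]
    exact solution_step hq' hn0 a b _ _ ht hd hab
  · intro a b a' b' hab hab'
    refine ⟨a' - a, b' - (b + a * ∑ j ∈ Finset.Ico 1 n, (a' - a) ^ q ^ j), ?_,
      by ring, by ring⟩
    have hτ' : (a' - a) ^ q ^ n = a' - a := hcard _
    have hs := sElem_add (n := n) hq' a (a' - a)
    rw [add_sub_cancel] at hs
    show tr q n (b' - (b + a * ∑ j ∈ Finset.Ico 1 n, (a' - a) ^ q ^ j))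
        = sElem q n 2 (a' - a)
    rw [tr_sub hq', tr_add hq', tr_mul_ico hq' hn0 a hτ',
      show tr q n b' = sElem q n 2 a' from hab', show tr q n b = sElem q n 2 a from hab, hs]
    ring
end

section
/- Let q be a prime power, n ≥ 2, 2 ≤ i ≤ n, and let K be a finite field with q^{2n} elements; let F = {γ ∈ K : γ^{q^n} = γ} be its subfield with q^n elements. If α, β ∈ K satisfy β^{q^{n−1}} + β^{q^{n−2}} + ⋯ + β = s_{n,i}(α) and α ∉ F, then s_{n−1,i−1}(α) ∈ F, where s_{n−1,i−1}(α) = Σ_{S ⊆ {0,…,n−2}, |S| = i−1} α^(Σ_{j∈S} q^j). -/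
namespace SElemAux

open Finset

/-- `T_{m,r}(α) = e_r(α, α^q, …, α^{q^{m-1}})`. -/
def Tsum (q m r : ℕ) {K : Type*} [CommSemiring K] (α : K) : K :=
  ∑ S ∈ powersetCard r (range m), α ^ (∑ j ∈ S, q ^ j)

/-- `U_{m,r}(α) = e_r(α^q, α^{q^2}, …, α^{q^m})`. -/
def Usum (q m r : ℕ) {K : Type*} [CommSemiring K] (α : K) : K :=
  ∑ S ∈ powersetCard r (range m), α ^ (∑ j ∈ S, q ^ (j + 1))

lemma sElem_eq_Tsum (q n i : ℕ) {K : Type*} [CommSemiring K] (α : K) :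
    sElem q n i α = Tsum q n i α := by
  unfold sElem Tsum
  rw [← Nat.Iio_eq_range, ← Fin.map_valEmbedding_univ, Finset.powersetCard_map,
    Finset.sum_map]
  refine Finset.sum_congr rfl fun S _ => ?_
  simp only [RelEmbedding.coe_toEmbedding, Finset.mapEmbedding_apply, Finset.sum_map]
  rfl

private lemma insert_inj_on {m r : ℕ} {x : ℕ} (hx : x ∉ range m) :
    ∀ S ∈ powersetCard r (range m), ∀ T ∈ powersetCard r (range m),
      insert x S = insert x T → S = T := by
  intro S hS T hT h
  have hxS : x ∉ S := fun hmem => hx ((mem_powersetCard.mp hS).1 hmem)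
  have hxT : x ∉ T := fun hmem => hx ((mem_powersetCard.mp hT).1 hmem)
  rw [← Finset.erase_insert hxS, ← Finset.erase_insert hxT, h]

private lemma disj_aux {m r r' : ℕ} {x : ℕ} (hx : x ∉ range m) :
    Disjoint (powersetCard r' (range m)) ((powersetCard r (range m)).image (insert x)) := by
  rw [Finset.disjoint_left]
  intro S hS hS'
  obtain ⟨T, _, rfl⟩ := Finset.mem_image.mp hS'
  exact hx ((mem_powersetCard.mp hS).1 (Finset.mem_insert_self x T))

lemma Usum_succ (q m r : ℕ) {K : Type*} [CommRing K] (α : K) :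
    Usum q (m + 1) (r + 1) α = Usum q m (r + 1) α + α ^ q ^ (m + 1) * Usum q m r α := by
  unfold Usum
  rw [Finset.range_add_one, Finset.powersetCard_succ_insert Finset.notMem_range_self,
    Finset.sum_union (disj_aux Finset.notMem_range_self),
    Finset.sum_image (insert_inj_on Finset.notMem_range_self)]
  congr 1
  rw [Finset.mul_sum]
  refine Finset.sum_congr rfl fun S hS => ?_
  have hmS : m ∉ S := fun hmem =>
    Finset.notMem_range_self ((mem_powersetCard.mp hS).1 hmem)
  rw [Finset.sum_insert hmS, pow_add]

private lemma range_succ_eq_insert_map (m : ℕ) :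
    range (m + 1) = insert 0 ((range m).map ⟨Nat.succ, Nat.succ_injective⟩) := by
  ext a
  simp only [Finset.mem_range, Finset.mem_insert, Finset.mem_map,
    Function.Embedding.coeFn_mk]
  constructor
  · intro h
    rcases a with _ | a
    · exact Or.inl rfl
    · exact Or.inr ⟨a, by omega, rfl⟩
  · rintro (rfl | ⟨b, hb, rfl⟩) <;> omega

private lemma zero_notMem_map (m : ℕ) :
    (0 : ℕ) ∉ (range m).map ⟨Nat.succ, Nat.succ_injective⟩ := by
  simp

lemma Tsum_succ (q m r : ℕ) {K : Type*} [CommRing K] (α : K) :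
    Tsum q (m + 1) (r + 1) α = Usum q m (r + 1) α + α * Usum q m r α := by
  unfold Tsum Usum
  have hins : ∀ S ∈ powersetCard r ((range m).map ⟨Nat.succ, Nat.succ_injective⟩),
      ∀ T ∈ powersetCard r ((range m).map ⟨Nat.succ, Nat.succ_injective⟩),
      insert 0 S = insert 0 T → S = T := by
    intro S hS T hT h
    have hS0 : (0 : ℕ) ∉ S := fun hmem => by
      have := (mem_powersetCard.mp hS).1 hmem
      simp at this
    have hT0 : (0 : ℕ) ∉ T := fun hmem => by
      have := (mem_powersetCard.mp hT).1 hmem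
      simp at this
    rw [← Finset.erase_insert hS0, ← Finset.erase_insert hT0, h]
  have hdis : Disjoint (powersetCard (r + 1) ((range m).map ⟨Nat.succ, Nat.succ_injective⟩))
      ((powersetCard r ((range m).map ⟨Nat.succ, Nat.succ_injective⟩)).image (insert 0)) := by
    rw [Finset.disjoint_left]
    intro S hS hS'
    obtain ⟨T, _, rfl⟩ := Finset.mem_image.mp hS'
    have := (mem_powersetCard.mp hS).1 (Finset.mem_insert_self 0 T)
    simp at this
  rw [range_succ_eq_insert_map m,
    Finset.powersetCard_succ_insert (zero_notMem_map m),
    Finset.sum_union hdis]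
  congr 1
  · rw [Finset.powersetCard_map, Finset.sum_map]
    refine Finset.sum_congr rfl fun S _ => ?_
    simp only [RelEmbedding.coe_toEmbedding, Finset.mapEmbedding_apply, Finset.sum_map]
    rfl
  · rw [Finset.sum_image hins, Finset.powersetCard_map, Finset.sum_map, Finset.mul_sum]
    refine Finset.sum_congr rfl fun S _ => ?_
    simp only [RelEmbedding.coe_toEmbedding, Finset.mapEmbedding_apply]
    have h0 : (0 : ℕ) ∉ S.map ⟨Nat.succ, Nat.succ_injective⟩ := by simp
    rw [Finset.sum_insert h0, Finset.sum_map, pow_add, pow_zero, pow_one]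
    rfl

lemma key_identity (q m r : ℕ) {K : Type*} [CommRing K] (α : K) :
    Usum q (m + 1) (r + 1) α
      = Tsum q (m + 1) (r + 1) α + (α ^ q ^ (m + 1) - α) * Usum q m r α := by
  rw [Usum_succ, Tsum_succ]; ring

lemma Tsum_pow (p k m r : ℕ) [Fact p.Prime] {K : Type*} [CommRing K] [CharP K p] (α : K) :
    (Tsum (p ^ k) m r α) ^ (p ^ k) = Usum (p ^ k) m r α := by
  unfold Tsum Usum
  rw [sum_pow_char_pow]
  refine Finset.sum_congr rfl fun S _ => ?_
  rw [← pow_mul]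
  congr 1
  rw [Finset.sum_mul]
  exact Finset.sum_congr rfl fun j _ => (pow_succ _ _).symm

end SElemAux

/-- over the field `K` with `q^{2n}` elements, if `(α, β)` satisfies
`β^{q^{n−1}} + ⋯ + β = s_{n,i}(α)` and `α` is not in the subfield with `q^n` elements,
then `s_{n−1,i−1}(α)` lies in that subfield. -/
theorem degree_two_place_condition
    (q n i : ℕ) (hq : IsPrimePow q) (hn : 2 ≤ n) (hi2 : 2 ≤ i) (hin : i ≤ n)
    (K : Type*) [Field K] [Fintype K] (hK : Fintype.card K = q ^ (2 * n))
    (α β : K)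
    (hαβ : ∑ j ∈ Finset.range n, β ^ q ^ j = sElem q n i α)
    (hα : α ^ q ^ n ≠ α) :
    (sElem q (n - 1) (i - 1) α) ^ q ^ n = sElem q (n - 1) (i - 1) α := by
  classical
  open SElemAux in
  obtain ⟨p, k, hp, hk, rfl⟩ := hq
  have hpp : Nat.Prime p := hp.nat_prime
  -- the characteristic of `K` is `p`
  obtain ⟨c, hc⟩ := CharP.exists K
  obtain ⟨d, hcprime, hcard⟩ := @FiniteField.card K _ _ c hc
  have hpc : p = c := by
    have hdvd : p ∣ c ^ (d : ℕ) := by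
      rw [← hcard, hK]
      exact dvd_pow (dvd_pow_self p hk.ne') (by positivity)
    exact (Nat.prime_dvd_prime_iff_eq hpp hcprime).mp (hpp.dvd_of_dvd_pow hdvd)
  subst hpc
  haveI : Fact p.Prime := ⟨hpp⟩
  set q := p ^ k with hqdef
  -- basic Frobenius facts
  have hsub : ∀ (x y : K) (a : ℕ), (x - y) ^ q ^ a = x ^ q ^ a - y ^ q ^ a := by
    intro x y a
    have hqa : q ^ a = p ^ (k * a) := by rw [hqdef, pow_mul]
    rw [hqa]
    exact sub_pow_char_pow ..
  have hinj : ∀ (x y : K) (a : ℕ), x ^ q ^ a = y ^ q ^ a → x = y := by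
    intro x y a h
    have h0 : (x - y) ^ q ^ a = 0 := by rw [hsub, h, sub_self]
    have hq0 : q ^ a ≠ 0 := (pow_pos (pow_pos hpp.pos k) a).ne'
    exact sub_eq_zero.mp (pow_eq_zero_iff hq0 |>.mp h0)
  -- abbreviations
  obtain ⟨m, rfl⟩ : ∃ m, n = m + 1 := ⟨n - 1, by omega⟩
  obtain ⟨r, rfl⟩ : ∃ r, i = r + 1 := ⟨i - 1, by omega⟩
  simp only [Nat.add_sub_cancel]
  set A : K := Usum q m r α with hA
  -- Step 1 : s^q = s + β^{q^n} - β
  have hshift : (∑ j ∈ Finset.range (m + 1), β ^ q ^ j) ^ q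
      = (∑ j ∈ Finset.range (m + 1), β ^ q ^ j) + β ^ q ^ (m + 1) - β := by
    rw [hqdef]
    have := sum_pow_char_pow (p := p) (n := k) (Finset.range (m + 1))
      (fun j => β ^ (p ^ k) ^ j)
    rw [this]
    have hterm : ∀ j, (β ^ (p ^ k) ^ j) ^ p ^ k = β ^ (p ^ k) ^ (j + 1) := by
      intro j; rw [← pow_mul, ← pow_succ]
    simp only [hterm]
    have h1 := Finset.sum_range_succ' (fun j => β ^ (p ^ k) ^ j) (m + 1)
    have h2 := Finset.sum_range_succ (fun j => β ^ (p ^ k) ^ j) (m + 1)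
    simp only [pow_zero, pow_one] at h1 h2
    linear_combination h2 - h1
  -- Step 2 : s^q = s + (α^{q^n} - α) * A
  have hkey : (sElem q (m + 1) (r + 1) α) ^ q
      = sElem q (m + 1) (r + 1) α + (α ^ q ^ (m + 1) - α) * A := by
    rw [sElem_eq_Tsum, hqdef, Tsum_pow, ← hqdef, key_identity, ← hA]
  -- Step 3 : β^{q^n} - β = (α^{q^n} - α) * A
  have hmain : β ^ q ^ (m + 1) - β = (α ^ q ^ (m + 1) - α) * A := by
    have := hshift
    rw [hαβ, hkey] at this
    linear_combination -this
  -- Step 4 : apply Frobenius^n and use x^{card K} = x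
  have hcardpow : ∀ x : K, (x ^ q ^ (m + 1)) ^ q ^ (m + 1) = x := by
    intro x
    rw [← pow_mul, ← pow_add, ← two_mul, ← hK]
    exact FiniteField.pow_card x
  have hmain2 : β - β ^ q ^ (m + 1) = (α - α ^ q ^ (m + 1)) * A ^ q ^ (m + 1) := by
    calc β - β ^ q ^ (m + 1)
        = (β ^ q ^ (m + 1)) ^ q ^ (m + 1) - β ^ q ^ (m + 1) := by rw [hcardpow]
      _ = (β ^ q ^ (m + 1) - β) ^ q ^ (m + 1) := (hsub _ _ _).symm
      _ = ((α ^ q ^ (m + 1) - α) * A) ^ q ^ (m + 1) := by rw [hmain]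
      _ = (α ^ q ^ (m + 1) - α) ^ q ^ (m + 1) * A ^ q ^ (m + 1) := mul_pow ..
      _ = ((α ^ q ^ (m + 1)) ^ q ^ (m + 1) - α ^ q ^ (m + 1)) * A ^ q ^ (m + 1) := by
          rw [hsub]
      _ = (α - α ^ q ^ (m + 1)) * A ^ q ^ (m + 1) := by rw [hcardpow]
  -- Step 5 : A is fixed by Frobenius^n
  have hAfix : A ^ q ^ (m + 1) = A := by
    have hcomb : (α ^ q ^ (m + 1) - α) * (A - A ^ q ^ (m + 1)) = 0 := by
      linear_combination -hmain - hmain2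
    have hne : α ^ q ^ (m + 1) - α ≠ 0 := sub_ne_zero.mpr hα
    have := (mul_eq_zero.mp hcomb).resolve_left hne
    exact (sub_eq_zero.mp this).symm
  -- Step 6 : descend from A = (Tsum)^q via injectivity of Frobenius
  apply hinj _ _ 1
  have hTA : (sElem q m r α) ^ q = A := by
    rw [sElem_eq_Tsum, hqdef, Tsum_pow, ← hqdef, ← hA]
  calc ((sElem q m r α) ^ q ^ (m + 1)) ^ q ^ 1
      = ((sElem q m r α) ^ q) ^ q ^ (m + 1) := by
        rw [← pow_mul, ← pow_mul, pow_one]; ring_nf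
    _ = A ^ q ^ (m + 1) := by rw [hTA]
    _ = A := hAfix
    _ = (sElem q m r α) ^ q := hTA.symm
    _ = (sElem q m r α) ^ q ^ 1 := by rw [pow_one]
end

section
/- Let p be a prime, q = p^e with e ≥ 1, F a field of characteristic p, and c ∈ F. Suppose the polynomial X^q + X − c splits over F, and let R ⊆ F be its set of roots (necessarily q distinct roots, since the derivative of X^q + X − c is 1). Then the power sums S_r = Σ_{u∈R} u^r satisfy: S_r = 0 for all r with 1 ≤ r ≤ q−2; S_{q−1} = 1; S_r = 0 for all r with q ≤ r ≤ 2q−3; and S_{2(q−1)} = −1. -/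
/-! Since `(X ^ q + X - C c)' = 1`, Lagrange interpolation of `X ^ r` at the `q` distinct roots
(Euler's formula `∑ u, u ^ r / f'(u) = [r = deg f - 1]` for `r < deg f`) gives `S_r = [r = q - 1]`
for `r < q`, including `S_0 = q = 0`. Beyond that, `u ^ q = c - u` yields the recursion
`S_(r+q) = c S_r - S_(r+1)`. -/

open Polynomial Finset

theorem Polynomial.Splits.sum_roots_pow_div_eval_derivative {F : Type*} [Field F] [DecidableEq F]
    {f : F[X]} (hf : f.Splits) (hm : f.Monic) (hnodup : f.roots.Nodup) {r : ℕ}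
    (hr : r < f.natDegree) :
    ∑ x ∈ f.roots.toFinset, x ^ r / f.derivative.eval x =
      if r = f.natDegree - 1 then 1 else 0 := by
  have hcard : #f.roots.toFinset = f.natDegree := by
    rw [Multiset.toFinset_card_of_nodup hnodup, hf.natDegree_eq_card_roots]
  have hlagrange := Lagrange.coeff_eq_sum (s := f.roots.toFinset) (v := id) (Set.injOn_id _)
    (P := X ^ r) (by rw [degree_X_pow, hcard]; exact_mod_cast hr)
  rw [hcard, coeff_X_pow] at hlagrange
  simp_rw [eq_comm (a := f.natDegree - 1)] at hlagrange
  rw [hlagrange]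
  refine sum_congr rfl fun x hx => ?_
  rw [hf.eval_root_derivative hm (Multiset.mem_toFinset.mp hx), eval_pow, eval_X, id,
    prod_eq_multiset_prod, erase_val, Multiset.toFinset_val, hnodup.dedup]
  rfl

theorem Finset.sum_pow_add_eq_of_pow_add_self_eq {R : Type*} [CommRing R] {s : Finset R} {q : ℕ}
    {c : R} (hs : ∀ u ∈ s, u ^ q + u = c) (r : ℕ) :
    ∑ u ∈ s, u ^ (r + q) = c * ∑ u ∈ s, u ^ r - ∑ u ∈ s, u ^ (r + 1) := by
  rw [mul_sum, ← sum_sub_distrib]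
  refine sum_congr rfl fun u hu => ?_
  rw [pow_add, pow_succ, ← hs u hu]
  ring

namespace Polynomial

variable {F : Type*} [Field F] {q : ℕ} (c : F)

theorem monic_X_pow_add_X_sub_C (hq : 1 < q) : (X ^ q + X - C c : F[X]).Monic := by
  rw [add_sub_assoc]
  exact monic_X_pow_add (by rw [degree_X_sub_C]; exact_mod_cast hq)

theorem natDegree_X_pow_add_X_sub_C (hq : 1 < q) : (X ^ q + X - C c : F[X]).natDegree = q := by
  rw [add_sub_assoc, natDegree_add_eq_left_of_degree_lt, natDegree_X_pow]
  rw [degree_X_sub_C, degree_X_pow]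
  exact_mod_cast hq

theorem derivative_X_pow_add_X_sub_C (hq : (q : F) = 0) :
    derivative (X ^ q + X - C c : F[X]) = 1 := by
  simp [derivative_X_pow, hq]

theorem pow_add_self_eq_of_mem_roots {u : F} (hu : u ∈ (X ^ q + X - C c : F[X]).roots) :
    u ^ q + u = c := by
  simpa [sub_eq_zero] using (mem_roots'.mp hu).2

theorem sum_roots_X_pow_add_X_sub_C_pow [DecidableEq F] (hq : 1 < q) (hqF : (q : F) = 0)
    (hsplit : (X ^ q + X - C c : F[X]).Splits) {r : ℕ} (hr : r < q) :
    ∑ u ∈ (X ^ q + X - C c : F[X]).roots.toFinset, u ^ r = if r = q - 1 then 1 else 0 := by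
  have hder := derivative_X_pow_add_X_sub_C c hqF
  have hnodup : (X ^ q + X - C c : F[X]).roots.Nodup :=
    nodup_roots (by rw [separable_def, hder]; exact isCoprime_one_right)
  have hdeg := natDegree_X_pow_add_X_sub_C c hq
  have := hsplit.sum_roots_pow_div_eval_derivative (monic_X_pow_add_X_sub_C c hq) hnodup
    (hdeg ▸ hr)
  simpa only [hder, eval_one, div_one, hdeg] using this

end Polynomial

/-- power sums of the roots of `X^q + X − c` over a field of
characteristic `p`, where `q = p^e`: `S_r = 0` for `1 ≤ r ≤ q−2` and for
`q ≤ r ≤ 2q−3`, while `S_{q−1} = 1` and `S_{2(q−1)} = −1`. -/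
theorem power_sums_of_artin_schreier_roots
    (p e q : ℕ) (hp : p.Prime) (he : 1 ≤ e) (hq : q = p ^ e)
    (F : Type*) [Field F] [DecidableEq F] [CharP F p] (c : F)
    (hsplit : Polynomial.Splits
      (Polynomial.X ^ q + Polynomial.X - Polynomial.C c)) :
    let R := (Polynomial.X ^ q + Polynomial.X - Polynomial.C c : Polynomial F).roots.toFinset
    (∀ r : ℕ, 1 ≤ r → r ≤ q - 2 → ∑ u ∈ R, u ^ r = 0) ∧
    (∑ u ∈ R, u ^ (q - 1) = 1) ∧
    (∀ r : ℕ, q ≤ r → r ≤ 2 * q - 3 → ∑ u ∈ R, u ^ r = 0) ∧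
    (∑ u ∈ R, u ^ (2 * (q - 1)) = -1) := by
  intro R
  have hq1 : 1 < q := hq ▸ Nat.one_lt_pow (by omega) hp.one_lt
  have hqF : (q : F) = 0 := by
    rw [hq, Nat.cast_pow, CharP.cast_eq_zero, zero_pow (by omega)]
  have hlow : ∀ r < q, ∑ u ∈ R, u ^ r = if r = q - 1 then 1 else 0 :=
    fun r hr => sum_roots_X_pow_add_X_sub_C_pow c hq1 hqF hsplit hr
  have hshift : ∀ r, ∑ u ∈ R, u ^ (r + q) = c * ∑ u ∈ R, u ^ r - ∑ u ∈ R, u ^ (r + 1) :=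
    sum_pow_add_eq_of_pow_add_self_eq fun u hu =>
      pow_add_self_eq_of_mem_roots c (Multiset.mem_toFinset.mp hu)
  refine ⟨fun r _ hr => ?_, ?_, fun r hqr hr => ?_, ?_⟩
  · rw [hlow r (by omega), if_neg (by omega)]
  · rw [hlow _ (by omega), if_pos rfl]
  · obtain ⟨k, rfl⟩ := Nat.exists_eq_add_of_le' hqr
    rw [hshift, hlow k (by omega), hlow (k + 1) (by omega), if_neg (by omega), if_neg (by omega)]
    ring
  · rw [show 2 * (q - 1) = q - 2 + q by omega, hshift, hlow _ (by omega), hlow _ (by omega),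
      if_neg (by omega), if_pos (by omega)]
    ring
end
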